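/- arXiv:1411.4586 — 4 statements merged into one kernel-verified Lean document; each statement's English description precedes it below -/
import Mathlib

section
/- For every z > 0 and every b_max > 0, the integral from 0 to b_max of b · exp(-z/(4b²)) db equals (1/8) · (4 b_max² · exp(-z/(4 b_max²)) + z · Ei(-z/(4 b_max²))). -/
open MeasureTheory Real

/-- `negEi z` is the exponential integral `Ei(-z)`, defined for `z > 0` by
`Ei(-z) = -∫_z^∞ (e^{-t}/t) dt`. -/
noncomputable def negEi (z : ℝ) : ℝ := -∫ t in Set.Ioi z, Real.exp (-t) / t

/-!
Since `Ei(-u)' = e^{-u}/u`, the right-hand side `F(b)` is a primitive of `b e^{-z/(4b²)}` on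
`(0, ∞)`. As `b → 0⁺` we have `z/(4b²) → ∞`, so both terms of `F(b)` tend to `0`, and the
fundamental theorem of calculus with a one-sided limit at `0` gives the integral as `F(b_max)`.
-/

open Filter Set Topology

lemma continuousOn_exp_neg_div : ContinuousOn (fun t : ℝ => exp (-t) / t) (Ioi 0) :=
  fun t ht => (by fun_prop : Continuous fun t : ℝ => exp (-t)).continuousAt.div continuousAt_id
    ht.ne' |>.continuousWithinAt

lemma integrableOn_exp_neg_div_Ioi {u : ℝ} (hu : 0 < u) :
    IntegrableOn (fun t => exp (-t) / t) (Ioi u) := by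
  refine ((exp_neg_integrableOn_Ioi u one_pos).div_const u).mono'
    ((continuousOn_exp_neg_div.mono (Ioi_subset_Ioi hu.le)).aestronglyMeasurable measurableSet_Ioi)
    ((ae_restrict_mem measurableSet_Ioi).mono fun t (ht : u < t) => ?_)
  rw [norm_div, norm_of_nonneg (exp_pos _).le, norm_of_nonneg (hu.trans ht).le, neg_one_mul]
  exact div_le_div_of_nonneg_left (exp_pos _).le hu ht.le

lemma negEi_eq_intervalIntegral_sub {v : ℝ} (hv : 0 < v) :
    negEi v = (∫ t in (1:ℝ)..v, exp (-t) / t) - ∫ t in Ioi 1, exp (-t) / t := by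
  rw [negEi, ← intervalIntegral.integral_Ioi_sub_Ioi' (integrableOn_exp_neg_div_Ioi one_pos)
    (integrableOn_exp_neg_div_Ioi hv)]
  ring

lemma hasDerivAt_negEi {u : ℝ} (hu : 0 < u) : HasDerivAt negEi (exp (-u) / u) u := by
  have hint : IntervalIntegrable (fun t => exp (-t) / t) volume 1 u :=
    (continuousOn_exp_neg_div.mono fun t ht => (lt_min one_pos hu).trans_le ht.1).intervalIntegrable
  have hderiv := (intervalIntegral.integral_hasDerivAt_right hint
    (continuousOn_exp_neg_div.stronglyMeasurableAtFilter isOpen_Ioi u hu)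
    (continuousOn_exp_neg_div.continuousAt (Ioi_mem_nhds hu))).sub_const
      (∫ t in Ioi 1, exp (-t) / t)
  exact hderiv.congr_of_eventuallyEq <|
    eventually_gt_nhds hu |>.mono fun v hv => negEi_eq_intervalIntegral_sub hv

lemma tendsto_negEi_atTop : Tendsto negEi atTop (𝓝 0) := by
  have h := (intervalIntegral_tendsto_integral_Ioi 1 (integrableOn_exp_neg_div_Ioi one_pos)
    tendsto_id).sub_const (∫ t in Ioi 1, exp (-t) / t)
  rw [sub_self] at h
  exact h.congr' <| (eventually_gt_atTop 0).mono fun v hv => (negEi_eq_intervalIntegral_sub hv).symm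

noncomputable def expInvSqPrimitive (z b : ℝ) : ℝ :=
  (1/8) * (4 * b^2 * exp (-z / (4 * b^2)) + z * negEi (z / (4 * b^2)))

lemma hasDerivAt_expInvSqPrimitive {z b : ℝ} (hz : 0 < z) (hb : 0 < b) :
    HasDerivAt (expInvSqPrimitive z) (b * exp (-z / (4 * b ^ 2))) b := by
  have hsq : HasDerivAt (fun x : ℝ => 4 * x ^ 2) (4 * (2 * b)) b := by
    simpa using (hasDerivAt_pow 2 b).const_mul 4
  have hu : HasDerivAt (fun x => z / (4 * x ^ 2))
      ((0 * (4 * b ^ 2) - z * (4 * (2 * b))) / (4 * b ^ 2) ^ 2) b :=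
    (hasDerivAt_const b z).fun_div hsq (by positivity)
  have hv : HasDerivAt (fun x => -z / (4 * x ^ 2))
      ((0 * (4 * b ^ 2) - -z * (4 * (2 * b))) / (4 * b ^ 2) ^ 2) b :=
    (hasDerivAt_const b (-z)).fun_div hsq (by positivity)
  have hF := ((hsq.fun_mul hv.exp).fun_add
    (((hasDerivAt_negEi (by positivity)).comp b hu).const_mul z)).const_mul (1/8 : ℝ)
  refine hF.congr_deriv ?_
  field_simp
  ring

lemma tendsto_expInvSqPrimitive_zero {z : ℝ} (hz : 0 < z) :
    Tendsto (expInvSqPrimitive z) (𝓝[>] 0) (𝓝 0) := by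
  have hsq : Tendsto (fun b : ℝ => 4 * b ^ 2) (𝓝[>] 0) (𝓝[>] 0) :=
    tendsto_nhdsWithin_iff.2 ⟨((by fun_prop : Continuous fun b : ℝ => 4 * b ^ 2).tendsto' 0 0
      (by simp)).mono_left nhdsWithin_le_nhds, eventually_nhdsWithin_of_forall fun b (hb : 0 < b) =>
        show 0 < 4 * b ^ 2 by positivity⟩
  have hu : Tendsto (fun b : ℝ => z / (4 * b ^ 2)) (𝓝[>] 0) atTop := by
    simpa only [div_eq_mul_inv, Function.comp_def] using
      (tendsto_inv_nhdsGT_zero.comp hsq).const_mul_atTop hz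
  have hexp : Tendsto (fun b : ℝ => exp (-z / (4 * b ^ 2))) (𝓝[>] 0) (𝓝 0) := by
    simpa only [neg_div, Function.comp_def] using
      tendsto_exp_atBot.comp (tendsto_neg_atTop_atBot.comp hu)
  have h := (((tendsto_nhds_of_tendsto_nhdsWithin hsq).mul hexp).add
    ((tendsto_negEi_atTop.comp hu).const_mul z)).const_mul (1/8 : ℝ)
  rw [mul_zero, mul_zero, add_zero, mul_zero] at h
  exact h

lemma intervalIntegrable_mul_exp_neg_div_sq {z : ℝ} (hz : 0 ≤ z) (a c : ℝ) :
    IntervalIntegrable (fun b : ℝ => b * exp (-z / (4 * b ^ 2))) volume a c := by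
  refine (continuous_abs.intervalIntegrable a c).mono_fun' (by fun_prop) (ae_of_all _ fun b => ?_)
  have hexp_le : exp (-z / (4 * b ^ 2)) ≤ 1 :=
    exp_le_one_iff.2 (div_nonpos_of_nonpos_of_nonneg (by linarith) (by positivity))
  show ‖b * exp (-z / (4 * b ^ 2))‖ ≤ |b|
  rw [norm_mul, norm_of_nonneg (exp_pos _).le, Real.norm_eq_abs]
  exact mul_le_of_le_one_right (abs_nonneg b) hexp_le

theorem integral_b_exp (z bmax : ℝ) (hz : 0 < z) (hb : 0 < bmax) :
    (∫ b in Set.Ioc (0:ℝ) bmax, b * Real.exp (-z / (4 * b^2)))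
      = (1/8) * (4 * bmax^2 * Real.exp (-z / (4 * bmax^2))
          + z * negEi (z / (4 * bmax^2))) := by
  rw [← intervalIntegral.integral_of_le hb.le, ← sub_zero (_ * _)]
  exact intervalIntegral.integral_eq_sub_of_hasDerivAt_of_tendsto hb
    (fun b hb' => hasDerivAt_expInvSqPrimitive hz hb'.1)
    (intervalIntegrable_mul_exp_neg_div_sq hz.le 0 bmax) (tendsto_expInvSqPrimitive_zero hz)
    ((hasDerivAt_expInvSqPrimitive hz hb).continuousAt.tendsto.mono_left nhdsWithin_le_nhds)
end

section
/- For every z > 0 and every b_max > 0, the integral from 0 to b_max of (1/b) · exp(-z/(4b²)) db equals -(1/2) · Ei(-z/(4 b_max²)). -/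
open MeasureTheory Real

/-! The substitution `t = z / (4 b²)` maps `(0, bmax)` decreasingly onto `(z / (4 bmax²), ∞)`
with `|dt| = 2t db / b`, which turns `e^{-t} / t` into `2 e^{-z/(4b²)} / b`. -/

open Set

lemma hasDerivAt_const_div_sq (c : ℝ) {b : ℝ} (hb : b ≠ 0) :
    HasDerivAt (fun x => c / x ^ 2) (-(2 * c / b ^ 3)) b := by
  refine ((hasDerivAt_const b c).div (hasDerivAt_pow 2 b) (pow_ne_zero 2 hb)).congr_deriv ?_
  field_simp
  ring

lemma strictAntiOn_const_div_sq {c : ℝ} (hc : 0 < c) :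
    StrictAntiOn (fun x : ℝ => c / x ^ 2) (Ioi 0) := fun _ hx _ _ hxy =>
  div_lt_div_of_pos_left hc (pow_pos hx 2) (pow_lt_pow_left₀ hxy hx.le two_ne_zero)

lemma image_const_div_sq_Ioo {c β : ℝ} (hc : 0 < c) (hβ : 0 < β) :
    (fun x => c / x ^ 2) '' Ioo 0 β = Ioi (c / β ^ 2) := by
  ext t
  constructor
  · rintro ⟨b, ⟨hb0, hbβ⟩, rfl⟩
    exact strictAntiOn_const_div_sq hc hb0 hβ hbβ
  · intro (ht : c / β ^ 2 < t)
    have ht0 : 0 < t := (by positivity : 0 < c / β ^ 2).trans ht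
    refine ⟨√(c / t), ⟨by positivity, ?_⟩, ?_⟩
    · rw [sqrt_lt' hβ, div_lt_iff₀ ht0]
      rwa [div_lt_iff₀ (by positivity), mul_comm] at ht
    · simp only [sq_sqrt (div_pos hc ht0).le]
      field_simp

lemma integral_Ioi_eq_integral_Ioo_comp_const_div_sq {E : Type*} [NormedAddCommGroup E]
    [NormedSpace ℝ E] {c β : ℝ} (hc : 0 < c) (hβ : 0 < β) (f : ℝ → E) :
    ∫ t in Ioi (c / β ^ 2), f t = ∫ b in Ioo 0 β, (2 * c / b ^ 3) • f (c / b ^ 2) := by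
  rw [← image_const_div_sq_Ioo hc hβ,
    integral_image_eq_integral_abs_deriv_smul measurableSet_Ioo
      (fun b hb => (hasDerivAt_const_div_sq c hb.1.ne').hasDerivWithinAt)
      ((strictAntiOn_const_div_sq hc).injOn.mono Ioo_subset_Ioi_self)]
  refine setIntegral_congr_fun measurableSet_Ioo fun b hb => ?_
  rw [abs_neg, abs_of_pos (by have := hb.1; positivity)]

theorem integral_inv_b_exp (z bmax : ℝ) (hz : 0 < z) (hb : 0 < bmax) :
    (∫ b in Set.Ioc (0:ℝ) bmax, (1 / b) * Real.exp (-z / (4 * b^2)))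
      = -(1/2) * negEi (z / (4 * bmax^2)) := by
  have hc : 0 < z / 4 := by positivity
  have hsubst := integral_Ioi_eq_integral_Ioo_comp_const_div_sq hc hb (fun t => exp (-t) / t)
  have hintegrand : ∀ b ∈ Ioo 0 bmax,
      (2 * (z / 4) / b ^ 3) • (exp (-(z / 4 / b ^ 2)) / (z / 4 / b ^ 2))
        = 2 * ((1 / b) * exp (-z / (4 * b ^ 2))) := by
    intro b hb'
    have := hb'.1.ne'
    rw [smul_eq_mul, neg_div, div_div]
    field_simp
  rw [setIntegral_congr_fun measurableSet_Ioo hintegrand, integral_const_mul, div_div] at hsubst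
  rw [integral_Ioc_eq_integral_Ioo, negEi, hsubst]
  ring
end

section
/- As z tends to 0 from the right, Ei(-z) - log(z) tends to γ, the Euler–Mascheroni constant; that is, the function z ↦ Ei(-z) - log(z) on (0, ∞) converges to the Euler–Mascheroni constant along the filter of neighborhoods of 0 within (0, ∞). -/
open MeasureTheory Real Filter

/-!
Integrating by parts, `Ei(-z) = e^{-z} log z - ∫_z^∞ e^{-t} log t dt`, so
`Ei(-z) - log z = (e^{-z} - 1) log z - ∫_z^∞ e^{-t} log t dt`. As `z → 0⁺` the first term
vanishes, since `|e^{-z} - 1| ≤ z` and `z log z → 0`, while the integral tends to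
`∫_0^∞ e^{-t} log t dt = Γ'(1) = -γ`.
-/

open Set Topology

theorem tendsto_setIntegral_Ioi_nhdsGT {E : Type*} [NormedAddCommGroup E] [NormedSpace ℝ E]
    {f : ℝ → E} {a : ℝ} (hf : IntegrableOn f (Ioi a)) :
    Tendsto (fun z => ∫ t in Ioi z, f t) (𝓝[>] a) (𝓝 (∫ t in Ioi a, f t)) := by
  have hprimitive : Tendsto (fun z => ∫ t in a..z, f t) (𝓝[>] a) (𝓝 0) := by
    have hint : IntervalIntegrable f volume a (a + 1) :=
      (intervalIntegrable_iff_integrableOn_Ioc_of_le (by linarith)).2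
        (hf.mono_set Ioc_subset_Ioi_self)
    have hcont := intervalIntegral.continuousOn_primitive_interval' hint left_mem_uIcc a
      left_mem_uIcc
    rw [ContinuousWithinAt, intervalIntegral.integral_same] at hcont
    refine hcont.mono_left ?_
    rw [← nhdsWithin_Ioc_eq_nhdsGT (lt_add_one a), uIcc_of_le (by linarith)]
    exact nhdsWithin_mono _ Ioc_subset_Icc_self
  have hsplit : ∀ᶠ z in 𝓝[>] a, (∫ t in Ioi a, f t) - ∫ t in a..z, f t = ∫ t in Ioi z, f t := by
    filter_upwards [self_mem_nhdsWithin] with z hz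
    rw [← intervalIntegral.integral_interval_add_Ioi hf (hf.mono_set (Ioi_subset_Ioi hz.le)),
      add_sub_cancel_left]
  simpa using (tendsto_const_nhds (x := ∫ t in Ioi a, f t)).sub hprimitive |>.congr' hsplit

theorem abs_log_le_two_mul_rpow_add_self {t : ℝ} (ht : 0 < t) :
    |log t| ≤ 2 * t ^ (-(1 / 2) : ℝ) + t := by
  rcases le_or_gt t 1 with h | h
  · have hhalf : -log t = 2 * log (t ^ (-(1 / 2) : ℝ)) := by rw [log_rpow ht]; ring
    rw [abs_of_nonpos (log_nonpos ht.le h), hhalf]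
    linarith [log_le_self (rpow_nonneg ht.le (-(1 / 2) : ℝ))]
  · rw [abs_of_nonneg (log_nonneg h.le)]
    linarith [log_le_self ht.le, rpow_nonneg ht.le (-(1 / 2) : ℝ)]

theorem integrableOn_exp_neg_mul_log : IntegrableOn (fun t => exp (-t) * log t) (Ioi 0) := by
  have hdom : IntegrableOn (fun t : ℝ => 2 * (exp (-t) * t ^ ((1 / 2 : ℝ) - 1))
      + exp (-t) * t ^ ((2 : ℝ) - 1)) (Ioi 0) :=
    ((GammaIntegral_convergent (by norm_num)).const_mul 2).add
      (GammaIntegral_convergent (by norm_num))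
  refine hdom.mono' (by fun_prop) ?_
  filter_upwards [ae_restrict_mem measurableSet_Ioi] with t ht
  rw [norm_mul, norm_of_nonneg (exp_pos _).le, norm_eq_abs]
  calc exp (-t) * |log t| ≤ exp (-t) * (2 * t ^ (-(1 / 2) : ℝ) + t) :=
        mul_le_mul_of_nonneg_left (abs_log_le_two_mul_rpow_add_self ht) (exp_pos _).le
    _ = _ := by norm_num [mul_add, mul_left_comm]

theorem integral_exp_neg_mul_log :
    ∫ t in Ioi 0, exp (-t) * log t = -eulerMascheroniConstant := by
  have hGamma : Complex.Gamma =ᶠ[𝓝 1] Complex.GammaIntegral := by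
    filter_upwards [(isOpen_lt continuous_const Complex.continuous_re).mem_nhds
      (show (0 : ℝ) < (1 : ℂ).re by norm_num)] with s hs using Complex.Gamma_eq_integral hs
  have hderiv := ((Complex.hasDerivAt_GammaIntegral (s := 1) (by norm_num)).congr_of_eventuallyEq
    hGamma).unique Complex.hasDerivAt_Gamma_one
  simp only [sub_self, Complex.cpow_zero, one_mul, ← Complex.ofReal_mul] at hderiv
  simp_rw [mul_comm (exp _)]
  exact_mod_cast hderiv

theorem tendsto_exp_neg_mul_log_atTop : Tendsto (fun t => exp (-t) * log t) atTop (𝓝 0) := by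
  refine tendsto_of_tendsto_of_tendsto_of_le_of_le' tendsto_const_nhds
    (tendsto_pow_mul_exp_neg_atTop_nhds_zero 1) ?_ ?_
  · filter_upwards [eventually_ge_atTop 1] with t ht
    exact mul_nonneg (exp_pos _).le (log_nonneg ht)
  · filter_upwards [eventually_ge_atTop 0] with t ht
    rw [pow_one, mul_comm t]
    exact mul_le_mul_of_nonneg_left (log_le_self ht) (exp_pos _).le

theorem integrableOn_exp_neg_mul_inv {z : ℝ} (hz : 0 < z) :
    IntegrableOn (fun t => exp (-t) * t⁻¹) (Ioi z) := by
  refine ((exp_neg_integrableOn_Ioi z one_pos).const_mul z⁻¹).mono' (by fun_prop) ?_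
  filter_upwards [ae_restrict_mem measurableSet_Ioi] with t ht
  rw [norm_of_nonneg (by have := hz.trans ht; positivity), neg_one_mul, mul_comm z⁻¹]
  exact mul_le_mul_of_nonneg_left (inv_anti₀ hz ht.le) (exp_pos _).le

theorem negEi_eq_exp_neg_mul_log_sub_integral {z : ℝ} (hz : 0 < z) :
    negEi z = exp (-z) * log z - ∫ t in Ioi z, exp (-t) * log t := by
  have hparts := integral_Ioi_mul_deriv_eq_deriv_mul (u := fun t => exp (-t))
    (u' := fun t => -exp (-t)) (v := log) (v' := fun t => t⁻¹)
    (fun t _ => by simpa using (hasDerivAt_neg t).exp)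
    (fun t ht => hasDerivAt_log (hz.trans ht).ne')
    (integrableOn_exp_neg_mul_inv hz)
    (by simpa [Pi.mul_def] using
      (integrableOn_exp_neg_mul_log.mono_set (Ioi_subset_Ioi hz.le)).neg)
    (((continuous_exp.comp continuous_neg).continuousAt.mul
      (continuousAt_log hz.ne')).tendsto.mono_left nhdsWithin_le_nhds)
    tendsto_exp_neg_mul_log_atTop
  simp only [neg_mul, integral_neg, sub_neg_eq_add, Pi.mul_apply, Function.comp_apply] at hparts
  rw [negEi]
  simp_rw [div_eq_mul_inv]
  rw [hparts]
  ring

theorem tendsto_exp_neg_sub_one_mul_log_nhdsGT_zero :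
    Tendsto (fun z => (exp (-z) - 1) * log z) (𝓝[>] 0) (𝓝 0) := by
  have hmul_log : Tendsto (fun z => z * log z) (𝓝[>] 0) (𝓝 0) := by
    simpa [mul_comm] using tendsto_log_mul_rpow_nhdsGT_zero one_pos
  refine squeeze_zero_norm' ?_ (by simpa using hmul_log.norm)
  filter_upwards [self_mem_nhdsWithin] with z (hz : 0 < z)
  have hexp : |exp (-z) - 1| ≤ z := by
    rw [abs_sub_comm, abs_of_nonneg (by linarith [exp_le_one_iff.mpr (neg_nonpos.mpr hz.le)])]
    linarith [add_one_le_exp (-z)]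
  rw [norm_mul, norm_eq_abs, norm_eq_abs, abs_of_pos hz]
  exact mul_le_mul_of_nonneg_right hexp (abs_nonneg _)

theorem negEi_sub_log_tendsto_eulerMascheroni :
    Filter.Tendsto (fun z : ℝ => negEi z - Real.log z)
      (nhdsWithin 0 (Set.Ioi 0)) (nhds Real.eulerMascheroniConstant) := by
  have hlim := tendsto_exp_neg_sub_one_mul_log_nhdsGT_zero.sub
    (tendsto_setIntegral_Ioi_nhdsGT integrableOn_exp_neg_mul_log)
  rw [integral_exp_neg_mul_log, zero_sub, neg_neg] at hlim
  refine hlim.congr' ?_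
  filter_upwards [self_mem_nhdsWithin] with z hz
  rw [negEi_eq_exp_neg_mul_log_sub_integral hz]
  ring
end

section
/- (Theorem 3, exact gradient of the distance.) Fix N ≥ 1, b_max > 0, points y_1, …, y_M ∈ ℝ^N with positive weights w_i^y, and weights w_1^x, …, w_L^x > 0. Regard D as a function of the locations x_1, …, x_L ∈ ℝ^N via D(x) = ∫_0^{b_max} b^{-(N-1)} ∫_{ℝ^N} (F̃(m,b) - F(m,b))² dm db. Fix indices ξ ∈ {1,…,L} and η ∈ {1,…,N}, and suppose that at the point under consideration x_ξ ≠ y_i for all i = 1,…,M and x_ξ ≠ x_i for all i ≠ ξ. Then the partial derivative of D with respect to the coordinate x_ξ^{(η)} exists and equals (π^{N/2}/2) · w_ξ^x · [ Σ_{i=1}^L w_i^x (x_ξ^{(η)} - x_i^{(η)}) · Ei(-‖x_ξ - x_i‖²/(4 b_max²)) - Σ_{i=1}^M w_i^y (x_ξ^{(η)} - y_i^{(η)}) · Ei(-‖x_ξ - y_i‖²/(4 b_max²)) ], where the i = ξ term in the first sum is interpreted as 0. -/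
open MeasureTheory Real

/-! Writing `F̃ - F` as the LCD of a single signed Dirac mixture `∑ c_p δ(z_p)`, the Gaussian
integral over `m` is explicit and gives `D = π^{N/2} ∑_{p,q} c_p c_q K(‖z_p - z_q‖²)` with
`K(d) = ∫₀^{b_max} b e^{-d/(4b²)} db` (`pairKernel`). For `d > 0` one may differentiate under
the integral sign, and the substitution `s = d/(4b²)` turns
`K'(d) = -¼ ∫₀^{b_max} e^{-d/(4b²)}/b db` into `Ei(-d/(4b_max²))/8`. Only the pairs containing the
moving point depend on `x_ξ^{(η)}`; for those the hypotheses keep `d > 0`, and the chain rule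
through `d = ‖x_ξ - z_q‖²` gives the formula. -/

open Finset Function

def sqDist {N : ℕ} (u v : Fin N → ℝ) : ℝ := ∑ k, (u k - v k) ^ 2

section SqDist

variable {N : ℕ}

theorem sqDist_nonneg (u v : Fin N → ℝ) : 0 ≤ sqDist u v :=
  sum_nonneg fun _ _ => sq_nonneg _

theorem sqDist_pos {u v : Fin N → ℝ} (h : u ≠ v) : 0 < sqDist u v := by
  obtain ⟨k, hk⟩ := Function.ne_iff.1 h
  have := sub_ne_zero.2 hk
  exact sum_pos' (fun _ _ => sq_nonneg _) ⟨k, mem_univ k, by positivity⟩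

theorem sqDist_self (u : Fin N → ℝ) : sqDist u u = 0 := by
  simp [sqDist]

theorem sqDist_comm (u v : Fin N → ℝ) : sqDist u v = sqDist v u :=
  sum_congr rfl fun _ _ => by ring

theorem sqDist_update (u v : Fin N → ℝ) (η : Fin N) (t : ℝ) :
    sqDist (update u η t) v = (t - v η) ^ 2 + ∑ k ∈ univ \ {η}, (u k - v k) ^ 2 := by
  rw [sqDist, ← sum_update_of_mem (mem_univ η)]
  refine sum_congr rfl fun k _ => ?_
  rcases eq_or_ne k η with rfl | hk <;> simp [*]

theorem hasDerivAt_sqDist_update (u v : Fin N → ℝ) (η : Fin N) (t : ℝ) :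
    HasDerivAt (fun t => sqDist (update u η t) v) (2 * (t - v η)) t := by
  simp_rw [sqDist_update]
  exact (((hasDerivAt_id t).sub_const _).pow 2 |>.add_const _).congr_deriv (by simp)

end SqDist

section Gaussian

variable {b : ℝ}

theorem gaussian_mul_gaussian (hb : b ≠ 0) (a c x : ℝ) :
    exp (-(a - x) ^ 2 / (2 * b ^ 2)) * exp (-(c - x) ^ 2 / (2 * b ^ 2))
      = exp (-(a - c) ^ 2 / (4 * b ^ 2)) * exp (-(1 / b ^ 2) * (x - (a + c) / 2) ^ 2) := by
  rw [← exp_add, ← exp_add]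
  congr 1
  field_simp
  ring

theorem integrable_gaussian_mul_gaussian (hb : b ≠ 0) (a c : ℝ) :
    Integrable fun x : ℝ =>
      exp (-(a - x) ^ 2 / (2 * b ^ 2)) * exp (-(c - x) ^ 2 / (2 * b ^ 2)) := by
  simp_rw [gaussian_mul_gaussian hb]
  exact ((integrable_exp_neg_mul_sq (by positivity)).comp_sub_right _).const_mul _

theorem integral_gaussian_mul_gaussian (hb : 0 < b) (a c : ℝ) :
    ∫ x : ℝ, exp (-(a - x) ^ 2 / (2 * b ^ 2)) * exp (-(c - x) ^ 2 / (2 * b ^ 2))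
      = √π * b * exp (-(a - c) ^ 2 / (4 * b ^ 2)) := by
  simp_rw [gaussian_mul_gaussian hb.ne']
  rw [integral_const_mul, integral_sub_right_eq_self (fun x => exp (-(1 / b ^ 2) * x ^ 2)),
    integral_gaussian, one_div, div_inv_eq_mul, sqrt_mul pi_nonneg, sqrt_sq hb.le]
  ring

end Gaussian

section LCD

variable {N : ℕ} {b : ℝ}

theorem integrable_prod_gaussian_mul_prod_gaussian (hb : b ≠ 0) (p q : Fin N → ℝ) :
    Integrable fun m : Fin N → ℝ =>
      (∏ k, exp (-(p k - m k) ^ 2 / (2 * b ^ 2))) * ∏ k, exp (-(q k - m k) ^ 2 / (2 * b ^ 2)) := by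
  simp_rw [← prod_mul_distrib]
  exact Integrable.fintype_prod fun k => integrable_gaussian_mul_gaussian hb (p k) (q k)

theorem integral_prod_gaussian_mul_prod_gaussian (hb : 0 < b) (p q : Fin N → ℝ) :
    ∫ m : Fin N → ℝ,
      (∏ k, exp (-(p k - m k) ^ 2 / (2 * b ^ 2))) * ∏ k, exp (-(q k - m k) ^ 2 / (2 * b ^ 2))
      = (√π * b) ^ N * exp (-sqDist p q / (4 * b ^ 2)) := by
  simp_rw [← prod_mul_distrib]
  rw [volume_pi, integral_fintype_prod_eq_prod
    (fun k x => exp (-(p k - x) ^ 2 / (2 * b ^ 2)) * exp (-(q k - x) ^ 2 / (2 * b ^ 2)))]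
  simp_rw [integral_gaussian_mul_gaussian hb]
  rw [prod_mul_distrib, prod_const, card_univ, Fintype.card_fin, ← exp_sum, sqDist,
    ← sum_div, ← sum_neg_distrib]

variable {ι : Type*} [Fintype ι]

/-- The LCD of the signed Dirac mixture `∑ p, c p • δ (z p)`; the difference `F̃ - F` of the
paper is the case of the points `y i` with weights `wy i` and `x i` with weights `-wx i`. -/
noncomputable def lcd (c : ι → ℝ) (z : ι → Fin N → ℝ) (b : ℝ) (m : Fin N → ℝ) : ℝ :=
  ∑ p, c p * ∏ k, exp (-(z p k - m k) ^ 2 / (2 * b ^ 2))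

theorem integral_lcd_sq (hb : 0 < b) (c : ι → ℝ) (z : ι → Fin N → ℝ) :
    ∫ m, lcd c z b m ^ 2
      = ∑ p, ∑ q, c p * c q * ((√π * b) ^ N * exp (-sqDist (z p) (z q) / (4 * b ^ 2))) := by
  have hint (p q : ι) := (integrable_prod_gaussian_mul_prod_gaussian hb.ne' (z p) (z q)).const_mul
    (c p * c q)
  have expand (m : Fin N → ℝ) : lcd c z b m ^ 2 = ∑ p, ∑ q, c p * c q *
      ((∏ k, exp (-(z p k - m k) ^ 2 / (2 * b ^ 2))) *
        ∏ k, exp (-(z q k - m k) ^ 2 / (2 * b ^ 2))) := by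
    rw [lcd, sq, sum_mul_sum]
    exact sum_congr rfl fun p _ => sum_congr rfl fun q _ => by ring
  simp_rw [expand]
  rw [integral_finsetSum _ fun p _ => integrable_finsetSum _ fun q _ => hint p q]
  refine sum_congr rfl fun p _ => ?_
  rw [integral_finsetSum _ fun q _ => hint p q]
  simp_rw [integral_const_mul, integral_prod_gaussian_mul_prod_gaussian hb]

noncomputable def pairKernel (bmax d : ℝ) : ℝ := ∫ b in Set.Ioc 0 bmax, b * exp (-d / (4 * b ^ 2))

theorem integrableOn_mul_exp_neg_div (bmax : ℝ) {d : ℝ} (hd : 0 ≤ d) :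
    IntegrableOn (fun b : ℝ => b * exp (-d / (4 * b ^ 2))) (Set.Ioc 0 bmax) := by
  refine Integrable.mono' (integrable_const bmax) (by fun_prop) ?_
  filter_upwards [ae_restrict_mem measurableSet_Ioc] with b ⟨hb0, hb⟩
  rw [norm_mul, norm_of_nonneg hb0.le, norm_of_nonneg (exp_pos _).le]
  calc b * exp (-d / (4 * b ^ 2)) ≤ b * 1 := by
        gcongr
        exact exp_le_one_iff.2 (div_nonpos_of_nonpos_of_nonneg (neg_nonpos.2 hd) (by positivity))
    _ ≤ bmax := by rwa [mul_one]

noncomputable def lcdDistance (bmax : ℝ) (c : ι → ℝ) (z : ι → Fin N → ℝ) : ℝ :=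
  ∫ b in Set.Ioc 0 bmax, 1 / b ^ (N - 1) * ∫ m, lcd c z b m ^ 2

theorem lcdDistance_eq (hN : 0 < N) (bmax : ℝ) (c : ι → ℝ) (z : ι → Fin N → ℝ) :
    lcdDistance bmax c z = √π ^ N * ∑ p, ∑ q, c p * c q * pairKernel bmax (sqDist (z p) (z q)) := by
  have hint (p q : ι) := (integrableOn_mul_exp_neg_div bmax
    (sqDist_nonneg (z p) (z q))).const_mul (c p * c q)
  have hpt : Set.EqOn (fun b => 1 / b ^ (N - 1) * ∫ m, lcd c z b m ^ 2)
      (fun b => √π ^ N * ∑ p, ∑ q, c p * c q * (b * exp (-sqDist (z p) (z q) / (4 * b ^ 2))))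
      (Set.Ioc 0 bmax) := by
    intro b ⟨hb, _⟩
    have hbN : b ^ N = b ^ (N - 1) * b := by rw [← pow_succ, Nat.sub_add_cancel hN]
    simp only [integral_lcd_sq hb, mul_sum, mul_pow, hbN]
    refine sum_congr rfl fun p _ => sum_congr rfl fun q _ => ?_
    field_simp
  rw [lcdDistance, setIntegral_congr_fun measurableSet_Ioc hpt, integral_const_mul,
    integral_finsetSum _ fun p _ => integrable_finsetSum _ fun q _ => hint p q]
  congr 1
  refine sum_congr rfl fun p _ => ?_
  rw [integral_finsetSum _ fun q _ => hint p q]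
  simp_rw [integral_const_mul, pairKernel]

end LCD

theorem exp_neg_le_inv {u : ℝ} (hu : 0 < u) : exp (-u) ≤ u⁻¹ := by
  rw [exp_neg]
  exact inv_anti₀ hu ((le_add_of_nonneg_right zero_le_one).trans (add_one_le_exp u))

theorem strictAntiOn_div_four_mul_sq {d : ℝ} (hd : 0 < d) :
    StrictAntiOn (fun b : ℝ => d / (4 * b ^ 2)) (Set.Ioi 0) := fun a ha b _ hab =>
  div_lt_div_of_pos_left hd (by have : 0 < a := ha; positivity)
    (by have : 0 < a := ha; gcongr)

theorem image_Ioo_div_four_mul_sq {bmax d : ℝ} (hbmax : 0 < bmax) (hd : 0 < d) :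
    (fun b : ℝ => d / (4 * b ^ 2)) '' Set.Ioo 0 bmax = Set.Ioi (d / (4 * bmax ^ 2)) := by
  ext s
  constructor
  · rintro ⟨b, ⟨hb0, hb⟩, rfl⟩
    exact strictAntiOn_div_four_mul_sq hd hb0 hbmax hb
  · intro hs
    have hs0 : 0 < s := (show 0 < d / (4 * bmax ^ 2) by positivity).trans hs
    refine ⟨√(d / (4 * s)), ⟨by positivity, ?_⟩, ?_⟩
    · rw [sqrt_lt' hbmax, div_lt_iff₀ (by positivity)]
      rw [Set.mem_Ioi, div_lt_iff₀ (by positivity)] at hs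
      linarith
    · simp only
      rw [sq_sqrt (by positivity)]
      field_simp

theorem integral_Ioc_exp_neg_div_sq_div {bmax d : ℝ} (hbmax : 0 < bmax) (hd : 0 < d) :
    ∫ b in Set.Ioc 0 bmax, exp (-d / (4 * b ^ 2)) / b = -negEi (d / (4 * bmax ^ 2)) / 2 := by
  have hderiv (b : ℝ) (hb : b ∈ Set.Ioo 0 bmax) : HasDerivWithinAt (fun b => d / (4 * b ^ 2))
      (-(d / (2 * b ^ 3))) (Set.Ioo 0 bmax) b := by
    have hb0 : 0 < b := hb.1
    refine (((hasDerivAt_const b d).fun_div ((hasDerivAt_pow 2 b).const_mul 4)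
      (by positivity)).congr_deriv ?_).hasDerivWithinAt
    field_simp
    ring
  have hinj : Set.InjOn (fun b => d / (4 * b ^ 2)) (Set.Ioo 0 bmax) :=
    (strictAntiOn_div_four_mul_sq hd).injOn.mono Set.Ioo_subset_Ioi_self
  have hsubst := integral_image_eq_integral_abs_deriv_smul measurableSet_Ioo hderiv hinj
    fun s => exp (-s) / s
  rw [image_Ioo_div_four_mul_sq hbmax hd] at hsubst
  rw [negEi, neg_neg, hsubst, integral_Ioc_eq_integral_Ioo, ← integral_div]
  refine setIntegral_congr_fun measurableSet_Ioo fun b hb => ?_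
  have hb0 : 0 < b := hb.1
  rw [smul_eq_mul, abs_neg, abs_of_pos (by positivity)]
  field_simp
  norm_num

theorem hasDerivAt_pairKernel {bmax d₀ : ℝ} (hbmax : 0 < bmax) (hd₀ : 0 < d₀) :
    HasDerivAt (pairKernel bmax) (negEi (d₀ / (4 * bmax ^ 2)) / 8) d₀ := by
  set F' : ℝ → ℝ → ℝ := fun d b => -(exp (-d / (4 * b ^ 2)) / b) / 4
  have h_diff : ∀ᵐ b ∂volume.restrict (Set.Ioc 0 bmax), ∀ d ∈ Set.Ioi (d₀ / 2),
      HasDerivAt (fun d => b * exp (-d / (4 * b ^ 2))) (F' d b) d := by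
    filter_upwards [ae_restrict_mem measurableSet_Ioc] with b hb d _
    have hb0 : b ≠ 0 := hb.1.ne'
    refine ((((hasDerivAt_neg d).div_const _).exp).const_mul b).congr_deriv ?_
    simp only [F']
    field_simp
  have h_bound : ∀ᵐ b ∂volume.restrict (Set.Ioc 0 bmax), ∀ d ∈ Set.Ioi (d₀ / 2),
      ‖F' d b‖ ≤ 2 * bmax / d₀ := by
    filter_upwards [ae_restrict_mem measurableSet_Ioc] with b ⟨hb0, hb⟩ d hd
    have hd : d₀ / 2 < d := hd
    have hd0 : 0 < d := (half_pos hd₀).trans hd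
    calc ‖F' d b‖ = exp (-(d / (4 * b ^ 2))) / b / 4 := by
          rw [norm_div, norm_neg, neg_div, norm_of_nonneg (by positivity), RCLike.norm_ofNat]
      _ ≤ (d / (4 * b ^ 2))⁻¹ / b / 4 := by gcongr; exact exp_neg_le_inv (by positivity)
      _ = b / d := by field_simp
      _ ≤ bmax / (d₀ / 2) := by gcongr
      _ = 2 * bmax / d₀ := by ring
  obtain ⟨-, h⟩ := hasDerivAt_integral_of_dominated_loc_of_deriv_le
    (F := fun d b => b * exp (-d / (4 * b ^ 2))) (μ := volume.restrict (Set.Ioc 0 bmax))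
    (Ioi_mem_nhds (half_lt_self hd₀)) (.of_forall fun d => by fun_prop)
    (integrableOn_mul_exp_neg_div bmax hd₀.le) (by fun_prop) h_bound (integrable_const _) h_diff
  refine h.congr_deriv ?_
  rw [integral_div, integral_neg, integral_Ioc_exp_neg_div_sq_div hbmax hd₀]
  ring

section Derivative

variable {N : ℕ} {bmax : ℝ}

noncomputable def pairKernelPartial (bmax : ℝ) (η : Fin N) (u v : Fin N → ℝ) : ℝ :=
  (u η - v η) / 4 * negEi (sqDist u v / (4 * bmax ^ 2))

theorem hasDerivAt_pairKernel_sqDist_update (hbmax : 0 < bmax) {u v : Fin N → ℝ} (h : u ≠ v)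
    (η : Fin N) :
    HasDerivAt (fun t => pairKernel bmax (sqDist (update u η t) v))
      (pairKernelPartial bmax η u v) (u η) :=
  ((hasDerivAt_pairKernel hbmax (sqDist_pos h)).comp_of_eq (u η)
    (hasDerivAt_sqDist_update u v η (u η))
    (by rw [update_eq_self])).congr_deriv (by rw [pairKernelPartial]; ring)

variable {ι : Type*} [DecidableEq ι]

theorem hasDerivAt_pairKernel_sqDist_update_apply (hbmax : 0 < bmax) {z : ι → Fin N → ℝ}
    {j : ι} (hz : ∀ r, r ≠ j → z j ≠ z r) (η : Fin N) (p q : ι) :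
    HasDerivAt (fun t => pairKernel bmax
        (sqDist (update z j (update (z j) η t) p) (update z j (update (z j) η t) q)))
      ((if p = j then pairKernelPartial bmax η (z j) (z q) else 0) +
        if q = j then pairKernelPartial bmax η (z j) (z p) else 0) (z j η) := by
  rcases eq_or_ne p j with rfl | hp
  · rcases eq_or_ne q p with rfl | hq
    · simpa [sqDist_self, pairKernelPartial] using hasDerivAt_const _ _
    · simpa [hq] using hasDerivAt_pairKernel_sqDist_update hbmax (hz q hq) η
  · rcases eq_or_ne q j with rfl | hq
    · simpa [hp, sqDist_comm] using hasDerivAt_pairKernel_sqDist_update hbmax (hz p hp) η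
    · simpa [hp, hq] using hasDerivAt_const _ _

theorem hasDerivAt_lcdDistance_update [Fintype ι] (hbmax : 0 < bmax) (c : ι → ℝ)
    {z : ι → Fin N → ℝ} {j : ι} (hz : ∀ r, r ≠ j → z j ≠ z r) (η : Fin N) :
    HasDerivAt (fun t => lcdDistance bmax c (update z j (update (z j) η t)))
      (π ^ ((N : ℝ) / 2) * (2 * c j * ∑ q, c q * pairKernelPartial bmax η (z j) (z q)))
      (z j η) := by
  simp_rw [lcdDistance_eq η.pos, rpow_div_two_eq_sqrt _ pi_nonneg, rpow_natCast]
  refine (HasDerivAt.fun_sum fun p _ => HasDerivAt.fun_sum fun q _ =>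
    (hasDerivAt_pairKernel_sqDist_update_apply hbmax hz η p q).const_mul (c p * c q)
    ).const_mul _ |>.congr_deriv ?_
  congr 1
  simp only [mul_add, mul_ite, mul_zero, sum_add_distrib, sum_ite_eq', mem_univ, if_true]
  rw [sum_comm]
  simp only [sum_ite_eq', mem_univ, if_true]
  rw [mul_sum, ← sum_add_distrib]
  exact sum_congr rfl fun _ _ => by ring

end Derivative

theorem distance_exact_partial_derivative_general
    (N M L : ℕ) (bmax : ℝ) (hb : 0 < bmax)
    (y : Fin M → Fin N → ℝ) (wy : Fin M → ℝ)
    (wx : Fin L → ℝ)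
    (x : Fin L → Fin N → ℝ)
    (ξ : Fin L) (η : Fin N)
    (hxy : ∀ i, x ξ ≠ y i) (hxx : ∀ i, i ≠ ξ → x ξ ≠ x i) :
    HasDerivAt (fun t : ℝ =>
      ∫ b in Set.Ioc (0:ℝ) bmax, (1 / b ^ (N - 1)) *
        ∫ m : Fin N → ℝ,
          ((∑ i, wy i * ∏ k, Real.exp (-(y i k - m k) ^ 2 / (2 * b ^ 2)))
            - ∑ i, wx i * ∏ k, Real.exp
                (-((Function.update x ξ (Function.update (x ξ) η t)) i k - m k) ^ 2
                  / (2 * b ^ 2))) ^ 2)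
      (Real.pi ^ ((N : ℝ) / 2) / 2 * wx ξ *
        ((∑ i, wx i * (x ξ η - x i η) * negEi ((∑ k, (x ξ k - x i k) ^ 2) / (4 * bmax ^ 2)))
          - ∑ i, wy i * (x ξ η - y i η) * negEi ((∑ k, (x ξ k - y i k) ^ 2) / (4 * bmax ^ 2))))
      (x ξ η) := by
  have hz : ∀ r, r ≠ .inr ξ → Sum.elim y x (.inr ξ) ≠ Sum.elim y x r := by
    rintro (i | i) hi
    · exact hxy i
    · exact hxx i (by rintro rfl; exact hi rfl)
  have h := hasDerivAt_lcdDistance_update hb (Sum.elim wy (-wx)) hz η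
  convert h using 1
  · funext t
    simp only [lcdDistance, lcd, Fintype.sum_sum_type, ← Sum.elim_update_right, Sum.elim_inl,
      Sum.elim_inr, Pi.neg_apply, neg_mul, sum_neg_distrib, sub_eq_add_neg]
  · simp only [Fintype.sum_sum_type, Sum.elim_inl, Sum.elim_inr, Pi.neg_apply, pairKernelPartial,
      sqDist]
    simp_rw [show ∀ a b c : ℝ, a * (b / 4 * c) = a * b * c / 4 from fun _ _ _ => by ring,
      ← sum_div, neg_mul, sum_neg_distrib]
    ring
  · rfl

theorem distance_exact_partial_derivative
    (N M L : ℕ) (hN : 1 ≤ N) (bmax : ℝ) (hb : 0 < bmax)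
    (y : Fin M → Fin N → ℝ) (wy : Fin M → ℝ) (hwy : ∀ i, 0 < wy i)
    (wx : Fin L → ℝ) (hwx : ∀ i, 0 < wx i)
    (x : Fin L → Fin N → ℝ)
    (ξ : Fin L) (η : Fin N)
    (hxy : ∀ i, x ξ ≠ y i) (hxx : ∀ i, i ≠ ξ → x ξ ≠ x i) :
    HasDerivAt (fun t : ℝ =>
      ∫ b in Set.Ioc (0:ℝ) bmax, (1 / b ^ (N - 1)) *
        ∫ m : Fin N → ℝ,
          ((∑ i, wy i * ∏ k, Real.exp (-(y i k - m k) ^ 2 / (2 * b ^ 2)))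
            - ∑ i, wx i * ∏ k, Real.exp
                (-((Function.update x ξ (Function.update (x ξ) η t)) i k - m k) ^ 2
                  / (2 * b ^ 2))) ^ 2)
      (Real.pi ^ ((N : ℝ) / 2) / 2 * wx ξ *
        ((∑ i, wx i * (x ξ η - x i η) * negEi ((∑ k, (x ξ k - x i k) ^ 2) / (4 * bmax ^ 2)))
          - ∑ i, wy i * (x ξ η - y i η) * negEi ((∑ k, (x ξ k - y i k) ^ 2) / (4 * bmax ^ 2))))
      (x ξ η) :=
  distance_exact_partial_derivative_general N M L bmax hb y wy wx x ξ η hxy hxx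
end
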